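/- Let E be an ultrametric Banach space over a complete ultrametric field K, U ⊆ E open, f : U → E analytic, and p ∈ U a fixed point of f such that α := f'(p) is a bicontinuous linear automorphism of E. Then the following are equivalent: (a) E admits a centre subspace (with a = 1) with respect to α, and p is a uniformly attractive fixed point of f; (b) there exists an ultrametric norm on E defining its topology such that the operator norm of α with respect to it is < 1. -/

import Mathlib

/-!
On a small `N`-ball around `p`, `f x - p` is `α (x - p)` plus a remainder of norm at most
`N (x - p) / 2`. If `α` contracts `N`, so does `f` on that ball, whence uniform attractivity.
Conversely, write `E = Es ⊕ W` with `W = E_c ⊕ E_u`, on which `α` does not decrease `N`. Since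
`N` is ultrametric, the remainder cannot change the norm of a dominating `W`-component, so an
orbit starting at `p + w`, `w ∈ W`, inside an invariant neighbourhood stays at `N`-distance
`≥ N w` from `p`; attractivity forces `w = 0`. Hence `W = 0` and `α = α|Es` is a contraction.
-/
open Filter Topology

/-- `N` is an ultrametric norm on the `K`-vector space `E`. -/
def IsUltraNorm (K : Type*) [NormedField K] {E : Type*} [AddCommGroup E] [Module K E]
    (N : E → ℝ) : Prop :=
  (∀ x : E, 0 ≤ N x) ∧ (∀ x : E, N x = 0 ↔ x = 0) ∧
    (∀ (c : K) (x : E), N (c • x) = ‖c‖ * N x) ∧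
    ∀ x y : E, N (x + y) ≤ max (N x) (N y)

/-- The norm `N` defines the canonical topology of `E`, i.e. it is equivalent
to the ambient norm. -/
def DefinesTopology {E : Type*} [NormedAddCommGroup E] (N : E → ℝ) : Prop :=
  ∃ c > 0, ∃ C > 0, ∀ x : E, c * ‖x‖ ≤ N x ∧ N x ≤ C * ‖x‖

/-- The fixed point `p ∈ U` of `f` is uniformly attractive: some neighbourhood `P ⊆ U` of
`p` consists of points whose forward orbits are defined and converge to `p`, and every
neighbourhood of `p` in `U` contains a neighbourhood `Q` of `p` with `f(Q) ⊆ Q`. -/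
def UniformlyAttractive {E : Type*} [TopologicalSpace E] (U : Set E) (f : E → E)
    (p : E) : Prop :=
  (∃ P, P ⊆ U ∧ P ∈ 𝓝 p ∧ (∀ x ∈ P, ∀ n : ℕ, f^[n] x ∈ U) ∧
    ∀ x ∈ P, Tendsto (fun n => f^[n] x) atTop (𝓝 p)) ∧
  ∀ P, P ⊆ U → P ∈ 𝓝 p → ∃ Q, Q ⊆ P ∧ Q ∈ 𝓝 p ∧ Set.MapsTo f Q Q

namespace IsUltraNorm

variable {K : Type*} [NormedField K] {E : Type*} [AddCommGroup E] [Module K E] {N : E → ℝ}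

theorem nonneg (hN : IsUltraNorm K N) (x : E) : 0 ≤ N x := hN.1 x

theorem eq_zero_iff (hN : IsUltraNorm K N) {x : E} : N x = 0 ↔ x = 0 := hN.2.1 x

theorem map_smul (hN : IsUltraNorm K N) (c : K) (x : E) : N (c • x) = ‖c‖ * N x := hN.2.2.1 c x

theorem map_add_le (hN : IsUltraNorm K N) (x y : E) : N (x + y) ≤ max (N x) (N y) :=
  hN.2.2.2 x y

theorem map_zero (hN : IsUltraNorm K N) : N 0 = 0 := hN.eq_zero_iff.2 rfl

theorem map_neg (hN : IsUltraNorm K N) (x : E) : N (-x) = N x := by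
  simpa using hN.map_smul (-1) x

theorem pos (hN : IsUltraNorm K N) {x : E} (hx : x ≠ 0) : 0 < N x :=
  (hN.nonneg x).lt_of_ne' (mt hN.eq_zero_iff.1 hx)

theorem add_eq_left_of_lt (hN : IsUltraNorm K N) {a b : E} (h : N b < N a) :
    N (a + b) = N a := by
  refine le_antisymm ((hN.map_add_le a b).trans (max_le le_rfl h.le)) ?_
  have hle := hN.map_add_le (a + b) (-b)
  rw [add_neg_cancel_right, hN.map_neg] at hle
  exact (le_max_iff.1 hle).resolve_right h.not_ge

end IsUltraNorm

namespace DefinesTopology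

variable {E : Type*} [NormedAddCommGroup E] {N : E → ℝ}

theorem nonneg (hN : DefinesTopology N) (x : E) : 0 ≤ N x := by
  obtain ⟨c, hc, C, -, h⟩ := hN
  exact (mul_nonneg hc.le (norm_nonneg x)).trans (h x).1

theorem hasBasis_nhds (hN : DefinesTopology N) (p : E) :
    (𝓝 p).HasBasis (fun r : ℝ => 0 < r) fun r => {x | N (x - p) < r} := by
  obtain ⟨c, hc, C, hC, h⟩ := hN
  refine Metric.nhds_basis_ball.to_hasBasis
    (fun ε hε => ⟨c * ε, by positivity, fun x hx => ?_⟩)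
    (fun r hr => ⟨r / C, by positivity, fun x hx => ?_⟩)
  · have hxN : N (x - p) < c * ε := hx
    rw [Metric.mem_ball, dist_eq_norm]
    exact lt_of_mul_lt_mul_left ((h (x - p)).1.trans_lt hxN) hc.le
  · rw [Metric.mem_ball, dist_eq_norm, lt_div_iff₀ hC] at hx
    exact (h (x - p)).2.trans_lt (by linarith)

theorem tendsto_nhds_iff (hN : DefinesTopology N) {ι : Type*} {l : Filter ι} {u : ι → E}
    {p : E} : Tendsto u l (𝓝 p) ↔ Tendsto (fun i => N (u i - p)) l (𝓝 0) := by
  rw [(hN.hasBasis_nhds p).tendsto_right_iff, Metric.tendsto_nhds]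
  simp only [Real.dist_eq, sub_zero, abs_of_nonneg (hN.nonneg _), Set.mem_ofPred_eq]

variable {K : Type*} [NontriviallyNormedField K] [NormedSpace K E]

theorem eventually_remainder_le (hN : DefinesTopology N) {f : E → E} {α : E →L[K] E} {p : E}
    (hα : HasFDerivAt f α p) {ε : ℝ} (hε : 0 < ε) :
    ∀ᶠ x in 𝓝 p, N (f x - f p - α (x - p)) ≤ ε * N (x - p) := by
  obtain ⟨c, hc, C, hC, h⟩ := hN
  filter_upwards [hα.isLittleO.def (show 0 < ε * c / C by positivity)] with x hx
  calc N (f x - f p - α (x - p)) ≤ C * ‖f x - f p - α (x - p)‖ := (h _).2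
    _ ≤ C * (ε * c / C * ‖x - p‖) := by gcongr
    _ = ε * (c * ‖x - p‖) := by field_simp
    _ ≤ ε * N (x - p) := by gcongr; exact (h _).1

theorem eventually_le_max_mul (hN : DefinesTopology N) (hNu : IsUltraNorm K N) {f : E → E}
    {α : E →L[K] E} {p : E} (hα : HasFDerivAt f α p) (hfp : f p = p) {b : ℝ}
    (hb : ∀ x, N (α x) ≤ b * N x) {ε : ℝ} (hε : 0 < ε) :
    ∀ᶠ x in 𝓝 p, N (f x - p) ≤ max b ε * N (x - p) := by
  filter_upwards [hN.eventually_remainder_le hα hε] with x hx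
  rw [hfp] at hx
  calc N (f x - p) = N (α (x - p) + (f x - p - α (x - p))) := by rw [add_sub_cancel]
    _ ≤ max (b * N (x - p)) (ε * N (x - p)) := (hNu.map_add_le _ _).trans (max_le_max (hb _) hx)
    _ = max b ε * N (x - p) := (max_mul_of_nonneg _ _ (hN.nonneg _)).symm

theorem uniformlyAttractive {U : Set E} {f : E → E} {p : E} (hN : DefinesTopology N)
    {δ b : ℝ} (hδ : 0 < δ) (hb0 : 0 ≤ b) (hb1 : b < 1) (hδU : {x | N (x - p) < δ} ⊆ U)
    (hcontr : ∀ x, N (x - p) < δ → N (f x - p) ≤ b * N (x - p)) :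
    UniformlyAttractive U f p := by
  have hmaps : ∀ r ≤ δ, Set.MapsTo f {x | N (x - p) < r} {x | N (x - p) < r} :=
    fun r hr x hx => (hcontr x (lt_of_lt_of_le hx hr)).trans_lt
      ((mul_le_of_le_one_left (hN.nonneg _) hb1.le).trans_lt hx)
  have horbit : ∀ x, N (x - p) < δ → ∀ n : ℕ, N (f^[n] x - p) ≤ b ^ n * N (x - p) := by
    intro x hx n
    induction n with
    | zero => simp
    | succ n ih =>
      rw [Function.iterate_succ_apply', pow_succ', mul_assoc]
      exact (hcontr _ ((hmaps δ le_rfl).iterate n hx)).trans (mul_le_mul_of_nonneg_left ih hb0)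
  refine ⟨⟨_, hδU, (hN.hasBasis_nhds p).mem_of_mem hδ,
    fun x hx n => hδU ((hmaps δ le_rfl).iterate n hx), fun x hx => ?_⟩, fun P _ hP => ?_⟩
  · have hgeom := (tendsto_pow_atTop_nhds_zero_of_lt_one hb0 hb1).mul_const (N (x - p))
    rw [zero_mul] at hgeom
    exact hN.tendsto_nhds_iff.2 (squeeze_zero (fun n => hN.nonneg _) (horbit x hx) hgeom)
  · obtain ⟨r, hr, hrP⟩ := (hN.hasBasis_nhds p).mem_iff.1 hP
    exact ⟨_, fun x hx => hrP (lt_of_lt_of_le hx (min_le_left r δ)),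
      (hN.hasBasis_nhds p).mem_of_mem (lt_min hr hδ), hmaps _ (min_le_right r δ)⟩

end DefinesTopology

theorem uniformlyAttractive_of_contraction {K : Type*} [NontriviallyNormedField K]
    {E : Type*} [NormedAddCommGroup E] [NormedSpace K E] {U : Set E} (hU : IsOpen U)
    {f : E → E} {p : E} (hp : p ∈ U) (hfp : f p = p) {α : E →L[K] E}
    (hα : HasFDerivAt f α p) {N : E → ℝ} (hN : IsUltraNorm K N) (hNt : DefinesTopology N)
    {b : ℝ} (hb1 : b < 1) (hb : ∀ x, N (α x) ≤ b * N x) : UniformlyAttractive U f p := by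
  obtain ⟨δ, hδ, hδU⟩ := (hNt.hasBasis_nhds p).mem_iff.1
    (inter_mem (hU.mem_nhds hp) (hNt.eventually_le_max_mul hN hα hfp hb one_half_pos))
  exact hNt.uniformlyAttractive hδ (by positivity) (max_lt hb1 one_half_lt_one)
    (fun x hx => (hδU hx).1) (fun x hx => (hδU hx).2)

theorem Submodule.eq_bot_of_forall_add_mem_eq_zero {K : Type*} [NontriviallyNormedField K]
    {E : Type*} [NormedAddCommGroup E] [NormedSpace K E] (W : Submodule K E) {p : E}
    {Q : Set E} (hQ : Q ∈ 𝓝 p) (h : ∀ w ∈ W, p + w ∈ Q → w = 0) : W = ⊥ := by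
  refine (Submodule.eq_bot_iff W).2 fun u hu => ?_
  have hline : Tendsto (fun t : K => p + t • u) (𝓝[≠] 0) (𝓝 p) := by
    have hcont : Continuous fun t : K => p + t • u := by fun_prop
    simpa using hcont.continuousAt.tendsto.mono_left (nhdsWithin_le_nhds (a := (0 : K)))
  obtain ⟨t, htQ, ht0⟩ := ((hline.eventually_mem hQ).and self_mem_nhdsWithin).exists
  exact (smul_eq_zero.1 (h _ (W.smul_mem t hu) htQ)).resolve_left ht0

section Splitting

variable {K : Type*} [NormedField K] {E : Type*} [AddCommGroup E] [Module K E]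
  {F : Type*} [FunLike F E E]

/-- In the paper's notation, `Es = E_{1,s}` and `W = E_{1,c} ⊕ E_{1,u}`. -/
structure IsCentreUnstableSplitting (N : E → ℝ) (α : F) (Es W : Submodule K E) : Prop where
  sup_eq_top : Es ⊔ W = ⊤
  mapsTo_stable : ∀ x ∈ Es, α x ∈ Es
  mapsTo_centreUnstable : ∀ w ∈ W, α w ∈ W
  norm_add : ∀ x ∈ Es, ∀ w ∈ W, N (x + w) = max (N x) (N w)
  norm_map_stable_le : ∀ x ∈ Es, N (α x) ≤ N x
  le_norm_map_centreUnstable : ∀ w ∈ W, N w ≤ N (α w)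

theorem isCentreUnstableSplitting_sup [AddMonoidHomClass F E E] {N : E → ℝ}
    (hN : IsUltraNorm K N) {α : F} {Es Ec Eu : Submodule K E} (hEs : ∀ x ∈ Es, α x ∈ Es)
    (hEc : ∀ y ∈ Ec, α y ∈ Ec) (hEu : ∀ z ∈ Eu, α z ∈ Eu) (hsup : Es ⊔ Ec ⊔ Eu = ⊤)
    (hmax : ∀ x ∈ Es, ∀ y ∈ Ec, ∀ z ∈ Eu, N (x + y + z) = max (N x) (max (N y) (N z)))
    (hc : ∀ y ∈ Ec, N (α y) = N y) (hs : ∀ x ∈ Es, N (α x) ≤ N x)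
    (hu : ∀ z ∈ Eu, N z ≤ N (α z)) : IsCentreUnstableSplitting N α Es (Ec ⊔ Eu) := by
  have hcu : ∀ y ∈ Ec, ∀ z ∈ Eu, N (y + z) = max (N y) (N z) := fun y hy z hz => by
    rw [← zero_add y, hmax 0 Es.zero_mem y hy z hz, hN.map_zero, zero_add,
      max_eq_right (le_max_of_le_left (hN.nonneg y))]
  refine ⟨by rw [← sup_assoc, hsup], hEs, ?_, ?_, hs, ?_⟩
  · rintro _ hw
    obtain ⟨y, hy, z, hz, rfl⟩ := Submodule.mem_sup.1 hw
    rw [map_add]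
    exact Submodule.add_mem_sup (hEc y hy) (hEu z hz)
  · rintro x hx _ hw
    obtain ⟨y, hy, z, hz, rfl⟩ := Submodule.mem_sup.1 hw
    rw [← add_assoc, hmax x hx y hy z hz, hcu y hy z hz]
  · rintro _ hw
    obtain ⟨y, hy, z, hz, rfl⟩ := Submodule.mem_sup.1 hw
    rw [map_add, hcu y hy z hz, hcu _ (hEc y hy) _ (hEu z hz), hc y hy]
    exact max_le_max le_rfl (hu z hz)

def dominatedCone (N : E → ℝ) (Es W : Submodule K E) (M : ℝ) : Set E :=
  {v | ∃ x ∈ Es, ∃ w ∈ W, v = x + w ∧ N x ≤ N w ∧ M ≤ N w}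

theorem mem_dominatedCone_of_mem {N : E → ℝ} (hN : IsUltraNorm K N) {Es W : Submodule K E}
    {w : E} (hw : w ∈ W) : w ∈ dominatedCone N Es W (N w) :=
  ⟨0, Es.zero_mem, w, hw, (zero_add w).symm, hN.map_zero ▸ hN.nonneg w, le_rfl⟩

namespace IsCentreUnstableSplitting

variable {N : E → ℝ} {α : F} {Es W : Submodule K E}

theorem exists_add_eq (h : IsCentreUnstableSplitting N α Es W) (v : E) :
    ∃ x ∈ Es, ∃ w ∈ W, x + w = v :=
  Submodule.mem_sup.1 (h.sup_eq_top ▸ Submodule.mem_top)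

theorem le_of_mem_dominatedCone (h : IsCentreUnstableSplitting N α Es W) {M : ℝ} {v : E}
    (hv : v ∈ dominatedCone N Es W M) : M ≤ N v := by
  obtain ⟨x, hx, w, hw, rfl, hxw, hMw⟩ := hv
  rw [h.norm_add x hx w hw, max_eq_right hxw]
  exact hMw

theorem map_add_mem_dominatedCone [AddMonoidHomClass F E E]
    (h : IsCentreUnstableSplitting N α Es W) (hN : IsUltraNorm K N) {M : ℝ} {v r : E}
    (hv : v ∈ dominatedCone N Es W M) (hr : N r < N v) : α v + r ∈ dominatedCone N Es W M := by
  obtain ⟨x, hx, w, hw, rfl, hxw, hMw⟩ := hv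
  obtain ⟨rs, hrs, rc, hrc, rfl⟩ := h.exists_add_eq r
  rw [h.norm_add x hx w hw, max_eq_right hxw, h.norm_add rs hrs rc hrc, max_lt_iff] at hr
  have hαw := h.le_norm_map_centreUnstable w hw
  have hw' : N (α w + rc) = N (α w) := hN.add_eq_left_of_lt (hr.2.trans_le hαw)
  refine ⟨α x + rs, add_mem (h.mapsTo_stable x hx) hrs, α w + rc,
    add_mem (h.mapsTo_centreUnstable w hw) hrc, by rw [map_add]; abel, ?_, ?_⟩
  · rw [hw']
    exact (hN.map_add_le _ _).trans
      (max_le ((h.norm_map_stable_le x hx).trans (hxw.trans hαw)) (hr.1.le.trans hαw))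
  · rw [hw']
    exact hMw.trans hαw

theorem iterate_sub_mem_dominatedCone [AddMonoidHomClass F E E]
    (h : IsCentreUnstableSplitting N α Es W) (hN : IsUltraNorm K N) {f : E → E} {p : E}
    {S : Set E} (hS : Set.MapsTo f S S)
    (hrem : ∀ x ∈ S, N (f x - p - α (x - p)) ≤ N (x - p) / 2) {M : ℝ} (hM : 0 < M)
    {x : E} (hx : x ∈ S) (hxM : x - p ∈ dominatedCone N Es W M) (n : ℕ) :
    f^[n] x - p ∈ dominatedCone N Es W M := by
  induction n with
  | zero => exact hxM
  | succ n ih =>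
    have hpos : 0 < N (f^[n] x - p) := hM.trans_le (h.le_of_mem_dominatedCone ih)
    have hstep := h.map_add_mem_dominatedCone hN ih
      ((hrem _ (hS.iterate n hx)).trans_lt (half_lt_self hpos))
    rwa [add_sub_cancel, ← Function.iterate_succ_apply' f n x] at hstep

end IsCentreUnstableSplitting

end Splitting

theorem IsCentreUnstableSplitting.eq_bot_of_uniformlyAttractive {K : Type*}
    [NontriviallyNormedField K] {E : Type*} [NormedAddCommGroup E] [NormedSpace K E]
    {N : E → ℝ} {α : E →L[K] E} {Es W : Submodule K E}
    (h : IsCentreUnstableSplitting N α Es W) (hN : IsUltraNorm K N) (hNt : DefinesTopology N)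
    {U : Set E} {f : E → E} {p : E} (hα : HasFDerivAt f α p) (hfp : f p = p)
    (hattr : UniformlyAttractive U f p) : W = ⊥ := by
  obtain ⟨⟨P, hPU, hP, -, hconv⟩, hinv⟩ := hattr
  have hrem : ∀ᶠ x in 𝓝 p, N (f x - p - α (x - p)) ≤ N (x - p) / 2 := by
    filter_upwards [hNt.eventually_remainder_le hα (one_half_pos (α := ℝ))] with x hx
    rwa [hfp, one_div_mul_eq_div] at hx
  obtain ⟨Q, hQ, hQp, hQQ⟩ := hinv _ (Set.inter_subset_left.trans hPU) (inter_mem hP hrem)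
  refine W.eq_bot_of_forall_add_mem_eq_zero hQp fun w hw hwQ => ?_
  by_contra hw0
  have horbit := h.iterate_sub_mem_dominatedCone hN hQQ (fun x hx => (hQ hx).2)
    (hN.pos hw0) hwQ (by simpa using mem_dominatedCone_of_mem hN hw)
  obtain ⟨n, hn⟩ :=
    ((hNt.tendsto_nhds_iff.1 (hconv _ (hQ hwQ).1)).eventually (gt_mem_nhds (hN.pos hw0))).exists
  exact (h.le_of_mem_dominatedCone (horbit n)).not_gt hn

theorem centre_subspace_and_uniformly_attractive_iff_opNorm_lt_one_general
    {K : Type*} [NontriviallyNormedField K]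
    {E : Type*} [NormedAddCommGroup E] [NormedSpace K E]
    {U : Set E} (hU : IsOpen U) {f : E → E}
    {p : E} (hp : p ∈ U) (hfp : f p = p)
    (α : E ≃L[K] E) (hα : HasFDerivAt f (α : E →L[K] E) p) :
    ((∃ (Es Ec Eu : Submodule K E) (N : E → ℝ),
        (∀ x ∈ Es, α x ∈ Es) ∧ (∀ x ∈ Ec, α x ∈ Ec) ∧ (∀ x ∈ Eu, α x ∈ Eu) ∧
        Disjoint Es (Ec ⊔ Eu) ∧ Disjoint Ec Eu ∧ Es ⊔ Ec ⊔ Eu = ⊤ ∧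
        Set.BijOn ⇑α (Eu : Set E) (Eu : Set E) ∧
        IsUltraNorm K N ∧ DefinesTopology N ∧
        (∀ x ∈ Es, ∀ y ∈ Ec, ∀ z ∈ Eu, N (x + y + z) = max (N x) (max (N y) (N z))) ∧
        (∀ y ∈ Ec, N (α y) = N y) ∧
        (∃ b, b < 1 ∧ ∀ x ∈ Es, N (α x) ≤ b * N x) ∧
        (∃ b, 1 < b ∧ ∀ z ∈ Eu, b * N z ≤ N (α z))) ∧
      UniformlyAttractive U f p)
    ↔ ∃ N : E → ℝ, IsUltraNorm K N ∧ DefinesTopology N ∧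
        ∃ b, b < 1 ∧ ∀ x : E, N (α x) ≤ b * N x := by
  constructor
  · rintro ⟨⟨Es, Ec, Eu, N, hEs, hEc, hEu, -, -, hsup, -, hN, hNt, hmax, hc, ⟨bs, hbs1, hbs⟩,
      ⟨bu, hbu1, hbu⟩⟩, hattr⟩
    have hsplit : IsCentreUnstableSplitting N (α : E →L[K] E) Es (Ec ⊔ Eu) :=
      isCentreUnstableSplitting_sup hN hEs hEc hEu hsup hmax hc
        (fun x hx => (hbs x hx).trans (mul_le_of_le_one_left (hN.nonneg x) hbs1.le))
        (fun z hz => (le_mul_of_one_le_left (hN.nonneg z) hbu1.le).trans (hbu z hz))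
    have hEs_top : Es = ⊤ := by
      simpa [hsplit.eq_bot_of_uniformlyAttractive hN hNt hα hfp hattr] using hsplit.sup_eq_top
    exact ⟨N, hN, hNt, bs, hbs1, fun x => hbs x (hEs_top ▸ Submodule.mem_top)⟩
  · rintro ⟨N, hN, hNt, b, hb1, hb⟩
    refine ⟨⟨⊤, ⊥, ⊥, N, by simp, by simp, by simp, by simp, by simp, by simp, by simp, hN, hNt,
      ?_, by simp, ⟨b, hb1, fun x _ => hb x⟩, ⟨2, one_lt_two, by simp [hN.map_zero]⟩⟩,
      uniformlyAttractive_of_contraction hU hp hfp hα hN hNt hb1 hb⟩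
    simp [hN.map_zero, hN.nonneg]

/-- For an analytic map `f` on an open subset of an ultrametric Banach
space, with fixed point `p` whose differential `α = f'(p)` is a bicontinuous automorphism:
`E` has a centre subspace (with `a = 1`) for `α` and `p` is uniformly attractive, if and
only if `α` has operator norm `< 1` for some ultrametric norm defining the topology. -/
theorem centre_subspace_and_uniformly_attractive_iff_opNorm_lt_one
    {K : Type*} [NontriviallyNormedField K] [IsUltrametricDist K] [CompleteSpace K]
    {E : Type*} [NormedAddCommGroup E] [NormedSpace K E] [IsUltrametricDist E]
    [CompleteSpace E]
    {U : Set E} (hU : IsOpen U) {f : E → E} (hf : AnalyticOnNhd K f U)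
    {p : E} (hp : p ∈ U) (hfp : f p = p)
    (α : E ≃L[K] E) (hα : HasFDerivAt f (α : E →L[K] E) p) :
    ((∃ (Es Ec Eu : Submodule K E) (N : E → ℝ),
        (∀ x ∈ Es, α x ∈ Es) ∧ (∀ x ∈ Ec, α x ∈ Ec) ∧ (∀ x ∈ Eu, α x ∈ Eu) ∧
        Disjoint Es (Ec ⊔ Eu) ∧ Disjoint Ec Eu ∧ Es ⊔ Ec ⊔ Eu = ⊤ ∧
        Set.BijOn ⇑α (Eu : Set E) (Eu : Set E) ∧
        IsUltraNorm K N ∧ DefinesTopology N ∧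
        (∀ x ∈ Es, ∀ y ∈ Ec, ∀ z ∈ Eu, N (x + y + z) = max (N x) (max (N y) (N z))) ∧
        (∀ y ∈ Ec, N (α y) = N y) ∧
        (∃ b, b < 1 ∧ ∀ x ∈ Es, N (α x) ≤ b * N x) ∧
        (∃ b, 1 < b ∧ ∀ z ∈ Eu, b * N z ≤ N (α z))) ∧
      UniformlyAttractive U f p)
    ↔ ∃ N : E → ℝ, IsUltraNorm K N ∧ DefinesTopology N ∧
        ∃ b, b < 1 ∧ ∀ x : E, N (α x) ≤ b * N x :=
  centre_subspace_and_uniformly_attractive_iff_opNorm_lt_one_general hU hp hfp α hα
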